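/- Let n be an even positive integer, let r ≥ 1 be an integer, and set d = gcd(n, r). Then [2d]_q divides the Gaussian binomial coefficient [2n−2r choose n−1]_q in the polynomial ring ℤ[q]. -/

import Mathlib

open Polynomial

/-- The q-integer `[n]_q = 1 + q + ⋯ + q^{n−1}` as a polynomial in `ℤ[q]`
(with `[0]_q = 0`). -/
noncomputable def qIntP (n : ℕ) : Polynomial ℤ := ∑ i ∈ Finset.range n, Polynomial.X ^ i

/-- The q-factorial `[n]_q! = [1]_q[2]_q⋯[n]_q` in `ℤ[q]`. -/
noncomputable def qFactP (n : ℕ) : Polynomial ℤ := ∏ i ∈ Finset.range n, qIntP (i + 1)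

/-- The Gaussian binomial coefficient `[m choose k]_q = [m]_q!/([k]_q![m−k]_q!)`
as a polynomial in `ℤ[q]` (the division, by a monic polynomial, is exact),
and `0` if `k > m`. -/
noncomputable def qBinomP (m k : ℕ) : Polynomial ℤ :=
  if k ≤ m then qFactP m /ₘ (qFactP k * qFactP (m - k)) else 0

/-- The Gaussian binomial coefficient `[m choose k]_{q²}`, i.e. `[m choose k]_q`
with `q` replaced by `q²`. -/
noncomputable def qBinomP2 (m k : ℕ) : Polynomial ℤ := (qBinomP m k).comp (Polynomial.X ^ 2)

/-!
From `[k]! [m-k]! [m choose k] = [m]!` one gets the absorption identity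
`[m choose k] [k] = [m] [m-1 choose k-1]`. Here `m = 2n - 2r` is a multiple of `2d`, so
`[2d] ∣ [m]`, while `k = n - 1` is odd and coprime to `n`, hence to `2d`. Coprime
exponents give coprime q-integers (a q-analogue of Bézout), so `[2d]` divides the binomial.
-/

theorem qIntP_add (a b : ℕ) : qIntP (a + b) = qIntP a + X ^ a * qIntP b := by
  simp only [qIntP, Finset.sum_range_add, Finset.mul_sum, pow_add]

theorem qIntP_monic {n : ℕ} (hn : 0 < n) : (qIntP n).Monic := monic_geom_sum_X hn.ne'

theorem qIntP_dvd_qIntP {a b : ℕ} (h : a ∣ b) : qIntP a ∣ qIntP b := by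
  obtain ⟨c, rfl⟩ := h
  induction c with
  | zero => simp [qIntP]
  | succ c ih =>
    rw [Nat.mul_succ, qIntP_add]
    exact dvd_add ih (dvd_mul_left _ _)

-- If `a u = 1 + b v`, then `[a u] - q [b v] = 1` with `[a] ∣ [a u]` and `[b] ∣ [b v]`.
theorem isCoprime_qIntP {a b : ℕ} (h : a.Coprime b) : IsCoprime (qIntP a) (qIntP b) := by
  rcases lt_or_ge 1 b with hb | hb
  · obtain ⟨u, -, hu⟩ := Nat.exists_mul_mod_eq_one_of_coprime h hb
    have hbezout : a * u = 1 + b * (a * u / b) := by rw [← hu]; exact (Nat.mod_add_div _ _).symm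
    obtain ⟨f, hf⟩ := qIntP_dvd_qIntP (Dvd.intro u rfl : a ∣ a * u)
    obtain ⟨g, hg⟩ := qIntP_dvd_qIntP (Dvd.intro _ rfl : b ∣ b * (a * u / b))
    have hsplit := qIntP_add 1 (b * (a * u / b))
    rw [← hbezout, hf, hg] at hsplit
    refine ⟨f, -(X * g), ?_⟩
    rw [show qIntP 1 = 1 by simp [qIntP], pow_one] at hsplit
    linear_combination hsplit
  · interval_cases b
    · obtain rfl : a = 1 := Nat.coprime_zero_right a |>.mp h
      simp [qIntP, isCoprime_one_left]
    · simp [qIntP, isCoprime_one_right]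

theorem qFactP_succ (n : ℕ) : qFactP (n + 1) = qFactP n * qIntP (n + 1) :=
  Finset.prod_range_succ _ n

theorem qFactP_monic (n : ℕ) : (qFactP n).Monic :=
  monic_prod_of_monic _ _ fun i _ => qIntP_monic i.succ_pos

-- The q-Pascal split `[k+l+2] = [k+1] + q^(k+1) [l+1]` of the last factor of `[k+l+2]!`.
theorem qFactP_mul_qFactP_dvd (k l : ℕ) : qFactP k * qFactP l ∣ qFactP (k + l) := by
  induction k generalizing l with
  | zero => simp [qFactP]
  | succ k ihk =>
    induction l with
    | zero => simp [qFactP]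
    | succ l ihl =>
      have hsplit : qFactP (k + 1 + (l + 1)) = qFactP (k + l + 1) * qIntP (k + 1) +
          X ^ (k + 1) * (qFactP (k + l + 1) * qIntP (l + 1)) := by
        rw [show k + 1 + (l + 1) = k + l + 1 + 1 by omega, qFactP_succ,
          show k + l + 1 + 1 = k + 1 + (l + 1) by omega, qIntP_add]
        ring
      have hleft : qFactP (k + 1) * qFactP (l + 1) ∣ qFactP (k + l + 1) * qIntP (k + 1) := by
        rw [qFactP_succ k, mul_right_comm]
        exact mul_dvd_mul (ihk (l + 1)) dvd_rfl
      have hright : qFactP (k + 1) * qFactP (l + 1) ∣ qFactP (k + l + 1) * qIntP (l + 1) := by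
        rw [qFactP_succ l, ← mul_assoc, Nat.add_right_comm]
        exact mul_dvd_mul ihl dvd_rfl
      rw [hsplit]
      exact dvd_add hleft (dvd_mul_of_dvd_right hright _)

theorem qBinomP_add_mul (k l : ℕ) :
    qBinomP (k + l) k * (qFactP k * qFactP l) = qFactP (k + l) := by
  have hmod := (modByMonic_eq_zero_iff_dvd ((qFactP_monic k).mul (qFactP_monic l))).2
    (qFactP_mul_qFactP_dvd k l)
  rw [qBinomP, if_pos (Nat.le_add_right k l), Nat.add_sub_cancel_left, mul_comm]
  simpa [hmod] using modByMonic_add_div (qFactP (k + l)) (qFactP k * qFactP l)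

theorem qBinomP_succ_mul_qIntP (k l : ℕ) :
    qBinomP (k + l + 1) (k + 1) * qIntP (k + 1) = qIntP (k + l + 1) * qBinomP (k + l) k := by
  apply mul_right_cancel₀ ((qFactP_monic k).mul (qFactP_monic l)).ne_zero
  have hsucc := qBinomP_add_mul (k + 1) l
  rw [Nat.add_right_comm] at hsucc
  calc qBinomP (k + l + 1) (k + 1) * qIntP (k + 1) * (qFactP k * qFactP l)
      = qBinomP (k + l + 1) (k + 1) * (qFactP (k + 1) * qFactP l) := by rw [qFactP_succ]; ring
    _ = qFactP (k + l) * qIntP (k + l + 1) := by rw [hsucc, qFactP_succ]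
    _ = qIntP (k + l + 1) * qBinomP (k + l) k * (qFactP k * qFactP l) := by
      rw [← qBinomP_add_mul k l]; ring

theorem qIntP_dvd_qBinomP {a m k : ℕ} (ham : a ∣ m) (hak : a.Coprime k) :
    qIntP a ∣ qBinomP m k := by
  rcases lt_or_ge m k with hmk | hkm
  · simp [qBinomP, hmk.not_ge]
  cases k with
  | zero =>
    obtain rfl : a = 1 := Nat.coprime_zero_right a |>.mp hak
    simp [qIntP]
  | succ k =>
    obtain ⟨l, rfl⟩ := Nat.exists_eq_add_of_le hkm
    rw [Nat.add_right_comm] at ham ⊢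
    refine (isCoprime_qIntP hak).dvd_of_dvd_mul_right ?_
    rw [qBinomP_succ_mul_qIntP]
    exact (qIntP_dvd_qIntP ham).mul_right _

theorem qIntP_two_gcd_dvd_qBinomP_general (n r : ℕ) (hn : 0 < n) (heven : Even n) :
    qIntP (2 * Nat.gcd n r) ∣ qBinomP (2 * n - 2 * r) (n - 1) := by
  apply qIntP_dvd_qBinomP
  · rw [← Nat.mul_sub]
    exact mul_dvd_mul_left 2 (Nat.dvd_sub (Nat.gcd_dvd_left n r) (Nat.gcd_dvd_right n r))
  · have hodd : Odd (n - 1) := Nat.Even.sub_odd hn heven odd_one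
    have hcop : n.Coprime (n - 1) := (Nat.coprime_self_sub_right hn).2 (Nat.coprime_one_right n)
    exact Nat.Coprime.mul_left (Nat.coprime_two_left.2 hodd)
      (hcop.coprime_dvd_left (Nat.gcd_dvd_left n r))

/-- Let `n` be an even positive integer, `r ≥ 1`, and `d = gcd(n, r)`. Then
`[2d]_q` divides the Gaussian binomial `[2n−2r choose n−1]_q` in `ℤ[q]`
(which is `0`, making the divisibility trivial, when `n−1 > 2n−2r`). -/
theorem qIntP_two_gcd_dvd_qBinomP (n r : ℕ) (hn : 0 < n) (heven : Even n) (hr : 1 ≤ r) :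
    qIntP (2 * Nat.gcd n r) ∣ qBinomP (2 * n - 2 * r) (n - 1) :=
  qIntP_two_gcd_dvd_qBinomP_general n r hn heven
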